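/- Let λ be a nonzero partition. Then the bipartition (λ, λ*) has defect at least 1 relative to δ = 0; that is, in its weight diagram there exist integers v < w with v labelled ∨ and w labelled ∧. (This is the combinatorial form of the statement that for m = n no nontrivial maximally atypical mixed tensor of Gl(n|n) is irreducible.) -/

import Mathlib

/-- A partition, encoded 0-indexed: `f i` is the part `λ_{i+1}`.  It is weakly
decreasing and eventually zero. -/
structure PartitionFn where
  f : ℕ → ℕ
  antitone' : ∀ i j : ℕ, i ≤ j → f j ≤ f i
  ev_zero : ∃ N : ℕ, ∀ i : ℕ, N ≤ i → f i = 0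

/-- The conjugate partition (0-indexed): `conjFn f j = λ*_{j+1} = #{i ≥ 1 : λ_i ≥ j+1}`. -/
noncomputable def conjFn (f : ℕ → ℕ) (j : ℕ) : ℕ := Set.ncard {i : ℕ | j + 1 ≤ f i}

/-- The length `l(λ) = #{i : λ_i > 0}` of a partition. -/
noncomputable def plen (f : ℕ → ℕ) : ℕ := Set.ncard {i : ℕ | 0 < f i}

/-- `I_∧(λ) = {λ^L_i − i + 1 : i ≥ 1}` (0-indexed: `{λ^L_{i+1} − i : i ≥ 0}`). -/
def Iwedge (fL : ℕ → ℕ) : Set ℤ := {x : ℤ | ∃ i : ℕ, x = (fL i : ℤ) - (i : ℤ)}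

/-- `I_∨(λ) = {i − δ − λ^R_i : i ≥ 1}` (0-indexed: `{(i+1) − δ − λ^R_{i+1} : i ≥ 0}`). -/
def Ivee (δ : ℤ) (fR : ℕ → ℕ) : Set ℤ :=
  {x : ℤ | ∃ i : ℕ, x = (i : ℤ) + 1 - δ - (fR i : ℤ)}

/-- Vertex `x` is labelled `∨` in the weight diagram of the bipartition `(fL, fR)`. -/
def VeeLabel (δ : ℤ) (fL fR : ℕ → ℕ) (x : ℤ) : Prop :=
  x ∈ Ivee δ fR ∧ x ∉ Iwedge fL

/-- Vertex `x` is labelled `∧` in the weight diagram of the bipartition `(fL, fR)`. -/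
def WedgeLabel (δ : ℤ) (fL fR : ℕ → ℕ) (x : ℤ) : Prop :=
  x ∈ Iwedge fL ∧ x ∉ Ivee δ fR

/-- A finite family of pairwise disjoint pairs `(v, w)` with `v < w`, `v` labelled `∨`
and `w` labelled `∧` in the weight diagram of the bipartition `(fL, fR)` relative to `δ`. -/
def CapFamily (δ : ℤ) (fL fR : ℕ → ℕ) (S : Finset (ℤ × ℤ)) : Prop :=
  (∀ p ∈ S, p.1 < p.2 ∧ VeeLabel δ fL fR p.1 ∧ WedgeLabel δ fL fR p.2) ∧
  ∀ p ∈ S, ∀ q ∈ S, p ≠ q →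
    p.1 ≠ q.1 ∧ p.1 ≠ q.2 ∧ p.2 ≠ q.1 ∧ p.2 ≠ q.2

/-- The defect of the bipartition `(fL, fR)` relative to `δ` equals `n`:
`n` is the maximal cardinality of a `CapFamily`. -/
def DefectEq (δ : ℤ) (fL fR : ℕ → ℕ) (n : ℕ) : Prop :=
  (∃ S : Finset (ℤ × ℤ), CapFamily δ fL fR S ∧ S.card = n) ∧
  ∀ S : Finset (ℤ × ℤ), CapFamily δ fL fR S → S.card ≤ n

/-- The bipartition `(fL, fR)` is `(m|n)`-cross:
`∃ 1 ≤ i ≤ m+1` with `λ^L_i + λ^R_{m+2−i} ≤ n` (0-indexed below). -/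
def IsCross (m n : ℕ) (fL fR : ℕ → ℕ) : Prop :=
  ∃ i : ℕ, i ≤ m ∧ fL i + fR (m - i) ≤ n

/-!
Take `v = 1 - λ*_1 ∈ I_∨` and `w = λ_1 ∈ I_∧` (both from the first index), so `v ≤ 0 < w`.
Everything rests on the Galois connection `i < λ*_{j+1} ↔ j < λ_{i+1}` (0-indexed as in
`lt_conjFn_iff`). With `j = 0` it says that `λ_{i+1} - i` exceeds `1 - λ*_1` for `i < λ*_1`
and equals `-i ≤ -λ*_1` afterwards, so `v ∉ I_∧`; symmetrically `i + 1 - λ*_{i+1}` is at most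
`i < λ_1` for `i < λ_1` and equals `i + 1 > λ_1` afterwards, so `w ∉ I_∨`.
-/

namespace PartitionFn

variable (lam : PartitionFn)

theorem finite_setOf_le (j : ℕ) : {i : ℕ | j + 1 ≤ lam.f i}.Finite := by
  obtain ⟨N, hN⟩ := lam.ev_zero
  refine (Set.finite_Iio N).subset fun i hi => ?_
  by_contra hNi
  have hzero := hN i (not_lt.1 hNi)
  simp only [Set.mem_ofPred_eq, hzero] at hi
  omega

theorem lt_conjFn_iff {i j : ℕ} : i < conjFn lam.f j ↔ j < lam.f i := by
  constructor
  · intro h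
    by_contra! hle
    have hsub : {k : ℕ | j + 1 ≤ lam.f k} ⊆ ↑(Finset.range i) := fun k hk => by
      simp only [Set.mem_ofPred_eq, Finset.coe_range, Set.mem_Iio] at hk ⊢
      by_contra! hik
      have := lam.antitone' i k hik
      omega
    have := Set.ncard_le_ncard hsub (Finset.finite_toSet _)
    rw [Set.ncard_coe_finset, Finset.card_range] at this
    exact not_lt.2 this h
  · intro h
    have hsub : ↑(Finset.range (i + 1)) ⊆ {k : ℕ | j + 1 ≤ lam.f k} := fun k hk => by
      simp only [Set.mem_ofPred_eq, Finset.coe_range, Set.mem_Iio] at hk ⊢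
      have := lam.antitone' k i (by omega)
      omega
    have := Set.ncard_le_ncard hsub (lam.finite_setOf_le j)
    rw [Set.ncard_coe_finset, Finset.card_range] at this
    exact this

theorem f_zero_pos (hne : lam.f ≠ fun _ => 0) : 0 < lam.f 0 := by
  by_contra! h
  refine hne (funext fun i => ?_)
  have := lam.antitone' 0 i (Nat.zero_le i)
  omega

theorem one_sub_conjFn_zero_notMem_Iwedge :
    1 - (conjFn lam.f 0 : ℤ) ∉ Iwedge lam.f := by
  rintro ⟨i, hi⟩
  by_cases hic : i < conjFn lam.f 0
  · have := (lam.lt_conjFn_iff).1 hic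
    omega
  · have : lam.f i = 0 := by
      by_contra h
      exact hic ((lam.lt_conjFn_iff).2 (Nat.pos_of_ne_zero h))
    omega

theorem f_zero_notMem_Ivee_conjFn : (lam.f 0 : ℤ) ∉ Ivee 0 (conjFn lam.f) := by
  rintro ⟨i, hi⟩
  by_cases hi0 : i < lam.f 0
  · have := (lam.lt_conjFn_iff (i := 0)).2 hi0
    omega
  · have : conjFn lam.f i = 0 := by
      by_contra h
      exact hi0 ((lam.lt_conjFn_iff).1 (Nat.pos_of_ne_zero h))
    omega

end PartitionFn

/-- a nonzero partition `λ` has `d((λ, λ*)) ≥ 1` relative to `δ = 0`: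
there are integers `v < w` with `v` labelled `∨` and `w` labelled `∧`. -/
theorem stmt9 (lam : PartitionFn) (hne : lam.f ≠ fun _ => 0) :
    ∃ v w : ℤ, v < w ∧ VeeLabel 0 lam.f (conjFn lam.f) v ∧
      WedgeLabel 0 lam.f (conjFn lam.f) w := by
  have hf0 := lam.f_zero_pos hne
  have hc0 : 0 < conjFn lam.f 0 := (lam.lt_conjFn_iff).2 hf0
  exact ⟨1 - conjFn lam.f 0, lam.f 0, by omega,
    ⟨⟨0, by simp⟩, lam.one_sub_conjFn_zero_notMem_Iwedge⟩,
    ⟨⟨0, by simp⟩, lam.f_zero_notMem_Ivee_conjFn⟩⟩
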